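/- Let m, n ≥ 1, 0 ≤ k ≤ min(m,n), and let (p̂,q̂) ∈ 𝒫ᵏ_{m,n}. Then there exists θ > 0 such that for every pair (p,q) ∈ 𝒞_{m,n} with η := ‖(p−p̂, q−q̂)‖ < θ and every ε with η < ε < θ, the gcd degree of (p̂,q̂) is identified as k = max{ j : 0 ≤ j ≤ min(m,n), θ_j(p,q) < ε }. -/

import Mathlib

open Polynomial Filter Topology

/-- The squared ℓ²-norm of the coefficient sequence of a polynomial. -/
noncomputable def pnormSq (p : ℂ[X]) : ℝ := ∑ i ∈ p.support, ‖p.coeff i‖ ^ 2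

/-- The ℓ²-norm of the coefficient sequence of a polynomial. -/
noncomputable def pnorm (p : ℂ[X]) : ℝ := Real.sqrt (pnormSq p)

/-- The ℓ²-norm of a pair of polynomials. -/
noncomputable def pairNorm (p q : ℂ[X]) : ℝ := Real.sqrt (pnormSq p + pnormSq q)

/-- The ℓ²-norm of a triple of polynomials. -/
noncomputable def tripleNorm (p q r : ℂ[X]) : ℝ :=
  Real.sqrt (pnormSq p + pnormSq q + pnormSq r)

/-- The degree of the greatest common divisor of two polynomials. -/
noncomputable def gcdDeg (p q : ℂ[X]) : ℕ := (EuclideanDomain.gcd p q).natDegree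

/-- The set 𝒞_{m,n} of pairs of polynomials of degrees exactly m and n. -/
def Cmn (m n : ℕ) : Set (ℂ[X] × ℂ[X]) :=
  {pq | pq.1.degree = (m : WithBot ℕ) ∧ pq.2.degree = (n : WithBot ℕ)}

/-- The GCD manifold 𝒫ᵏ_{m,n} : pairs in 𝒞_{m,n} whose GCD has degree k. -/
def Pmnk (m n k : ℕ) : Set (ℂ[X] × ℂ[X]) :=
  {pq | pq ∈ Cmn m n ∧ gcdDeg pq.1 pq.2 = k}

/-- The distance θ_k(p,q) from (p,q) to the GCD manifold 𝒫ᵏ_{m,n}. -/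
noncomputable def theta (m n k : ℕ) (p q : ℂ[X]) : ℝ :=
  sInf ((fun rs => pairNorm (p - rs.1) (q - rs.2)) '' Pmnk m n k)

/-- The bilinear Sylvester expression (w,v) ↦ p·w − q·v as a linear map. -/
noncomputable def sylMap (p q : ℂ[X]) : ℂ[X] × ℂ[X] →ₗ[ℂ] ℂ[X] :=
  (LinearMap.mulLeft ℂ p).comp (LinearMap.fst ℂ ℂ[X] ℂ[X]) -
    (LinearMap.mulLeft ℂ q).comp (LinearMap.snd ℂ ℂ[X] ℂ[X])

/-- The domain V_j = {(w,v) : deg w ≤ n−j, deg v ≤ m−j} of the j-th Sylvester map. -/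
noncomputable def Vspace (m n j : ℕ) : Submodule ℂ (ℂ[X] × ℂ[X]) :=
  (Polynomial.degreeLE ℂ ((n - j : ℕ) : WithBot ℕ)).prod
    (Polynomial.degreeLE ℂ ((m - j : ℕ) : WithBot ℕ))

/-! ### Auxiliary material -/

/-- Pair constructor for `WithLp 2` products, pinning the correct norm instance. -/
noncomputable def mk2 {α β : Type*} (a : α) (b : β) : WithLp 2 (α × β) := WithLp.toLp 2 (a, b)

/-- The coefficient vector of a polynomial, as a point of Euclidean space. -/
noncomputable def toE (d : ℕ) (p : ℂ[X]) : EuclideanSpace ℂ (Fin d) := WithLp.toLp 2 (fun i => p.coeff i)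

/-- The polynomial built from a coefficient vector. -/
noncomputable def ofE {d : ℕ} (c : EuclideanSpace ℂ (Fin d)) : ℂ[X] :=
  ∑ i : Fin d, Polynomial.monomial (i : ℕ) (c i)

lemma ofE_coeff {d : ℕ} (c : EuclideanSpace ℂ (Fin d)) (a : ℕ) :
    (ofE c).coeff a = if h : a < d then c ⟨a, h⟩ else 0 := by
  rw [ofE, Polynomial.finset_sum_coeff]
  simp only [Polynomial.coeff_monomial]
  split
  · next h =>
    rw [Finset.sum_eq_single (⟨a, h⟩ : Fin d)]
    · simp
    · intro i _ hne
      rw [if_neg]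
      intro hia
      exact hne (by ext; exact hia)
    · simp
  · next h =>
    apply Finset.sum_eq_zero
    intro i _
    rw [if_neg]
    intro hia
    exact h (hia ▸ i.isLt)

lemma ofE_toE {d : ℕ} (p : ℂ[X]) (h : p.degree < (d : ℕ)) : ofE (toE d p) = p := by
  ext a
  rw [ofE_coeff]
  split
  · rfl
  · next ha =>
    symm
    exact Polynomial.coeff_eq_zero_of_degree_lt
      (h.trans_le (by exact_mod_cast Nat.le_of_not_lt ha))

lemma ofE_eq_zero {d : ℕ} (c : EuclideanSpace ℂ (Fin d)) (h : ofE c = 0) : c = 0 := by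
  ext i
  have h2 := ofE_coeff c i
  rw [h, dif_pos i.isLt] at h2
  simpa using h2.symm

lemma natDegree_ofE_le {e : ℕ} (c : EuclideanSpace ℂ (Fin (e + 1))) : (ofE c).natDegree ≤ e := by
  rw [Polynomial.natDegree_le_iff_coeff_eq_zero]
  intro a ha
  rw [ofE_coeff, dif_neg (by omega)]

lemma ofE_smul {d : ℕ} (t : ℂ) (c : EuclideanSpace ℂ (Fin d)) : ofE (t • c) = t • ofE c := by
  ext a
  rw [ofE_coeff]
  simp only [Polynomial.coeff_smul, ofE_coeff, smul_eq_mul]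
  split
  · rfl
  · simp

lemma pnormSq_nonneg (p : ℂ[X]) : 0 ≤ pnormSq p :=
  Finset.sum_nonneg fun _ _ => by positivity

lemma pnormSq_eq {d : ℕ} (p : ℂ[X]) (h : p.degree < (d : ℕ)) :
    pnormSq p = ∑ i : Fin d, ‖p.coeff i‖ ^ 2 := by
  rw [pnormSq, Fin.sum_univ_eq_sum_range (fun i => ‖p.coeff i‖ ^ 2) d]
  apply Finset.sum_subset
  · intro a ha
    rw [Finset.mem_range]
    by_contra hc
    exact Polynomial.mem_support_iff.mp ha
      (Polynomial.coeff_eq_zero_of_degree_lt (h.trans_le (by exact_mod_cast Nat.le_of_not_lt hc)))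
  · intro a _ ha
    rw [Polynomial.notMem_support_iff.mp ha]
    simp

lemma pairNorm_eq_norm {d₁ d₂ : ℕ} (p q : ℂ[X]) (hp : p.degree < (d₁ : ℕ))
    (hq : q.degree < (d₂ : ℕ)) :
    pairNorm p q = ‖mk2 (toE d₁ p) (toE d₂ q)‖ := by
  rw [WithLp.prod_norm_eq_of_L2, EuclideanSpace.norm_eq, EuclideanSpace.norm_eq,
    Real.sq_sqrt (by positivity), Real.sq_sqrt (by positivity), pairNorm,
    pnormSq_eq p hp, pnormSq_eq q hq]
  rfl

lemma coeff_fst_le_pairNorm (p q : ℂ[X]) (a : ℕ) : ‖p.coeff a‖ ≤ pairNorm p q := by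
  have h1 : ‖p.coeff a‖ ^ 2 ≤ pnormSq p + pnormSq q := by
    rcases eq_or_ne (p.coeff a) 0 with h | h
    · simpa [h] using add_nonneg (pnormSq_nonneg p) (pnormSq_nonneg q)
    · have h2 : ‖p.coeff a‖ ^ 2 ≤ pnormSq p :=
        Finset.single_le_sum (f := fun i => ‖p.coeff i‖ ^ 2) (fun _ _ => by positivity)
          (Polynomial.mem_support_iff.mpr h)
      linarith [pnormSq_nonneg q]
  calc ‖p.coeff a‖ = Real.sqrt (‖p.coeff a‖ ^ 2) := (Real.sqrt_sq (norm_nonneg _)).symm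
    _ ≤ pairNorm p q := Real.sqrt_le_sqrt h1

lemma coeff_snd_le_pairNorm (p q : ℂ[X]) (a : ℕ) : ‖q.coeff a‖ ≤ pairNorm p q := by
  have h1 : ‖q.coeff a‖ ^ 2 ≤ pnormSq p + pnormSq q := by
    rcases eq_or_ne (q.coeff a) 0 with h | h
    · simpa [h] using add_nonneg (pnormSq_nonneg p) (pnormSq_nonneg q)
    · have h2 : ‖q.coeff a‖ ^ 2 ≤ pnormSq q :=
        Finset.single_le_sum (f := fun i => ‖q.coeff i‖ ^ 2) (fun _ _ => by positivity)
          (Polynomial.mem_support_iff.mpr h)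
      linarith [pnormSq_nonneg p]
  calc ‖q.coeff a‖ = Real.sqrt (‖q.coeff a‖ ^ 2) := (Real.sqrt_sq (norm_nonneg _)).symm
    _ ≤ pairNorm p q := Real.sqrt_le_sqrt h1

lemma pnormSq_neg (p : ℂ[X]) : pnormSq (-p) = pnormSq p := by
  rw [pnormSq, pnormSq, Polynomial.support_neg]
  exact Finset.sum_congr rfl fun i _ => by rw [Polynomial.coeff_neg, norm_neg]

lemma pairNorm_sub_comm (a b c d : ℂ[X]) :
    pairNorm (a - b) (c - d) = pairNorm (b - a) (d - c) := by
  rw [pairNorm, pairNorm, ← pnormSq_neg (a - b), ← pnormSq_neg (c - d), neg_sub, neg_sub]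

lemma pairNorm_triangle {d₁ d₂ : ℕ} (p₁ q₁ p₂ q₂ : ℂ[X])
    (hp₁ : p₁.degree < (d₁ : ℕ)) (hp₂ : p₂.degree < (d₁ : ℕ))
    (hq₁ : q₁.degree < (d₂ : ℕ)) (hq₂ : q₂.degree < (d₂ : ℕ)) :
    pairNorm (p₁ + p₂) (q₁ + q₂) ≤ pairNorm p₁ q₁ + pairNorm p₂ q₂ := by
  have hps : (p₁ + p₂).degree < (d₁ : ℕ) :=
    lt_of_le_of_lt (Polynomial.degree_add_le _ _) (max_lt hp₁ hp₂)
  have hqs : (q₁ + q₂).degree < (d₂ : ℕ) :=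
    lt_of_le_of_lt (Polynomial.degree_add_le _ _) (max_lt hq₁ hq₂)
  rw [pairNorm_eq_norm _ _ hps hqs, pairNorm_eq_norm _ _ hp₁ hq₁, pairNorm_eq_norm _ _ hp₂ hq₂]
  have heq : mk2 (toE d₁ (p₁ + p₂)) (toE d₂ (q₁ + q₂))
      = mk2 (toE d₁ p₁) (toE d₂ q₁) + mk2 (toE d₁ p₂) (toE d₂ q₂) := by
    show mk2 _ _ = mk2 (toE d₁ p₁ + toE d₁ p₂) (toE d₂ q₁ + toE d₂ q₂)
    congr 1 <;> ext i <;> simp [toE]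
  rw [heq]
  exact norm_add_le _ _

lemma euclid_apply_le {d : ℕ} (x : EuclideanSpace ℂ (Fin d)) (i : Fin d) : ‖x i‖ ≤ ‖x‖ := by
  have h1 : ‖x i‖ ^ 2 ≤ ∑ a : Fin d, ‖x a‖ ^ 2 :=
    Finset.single_le_sum (f := fun a => ‖x a‖ ^ 2) (fun _ _ => by positivity) (Finset.mem_univ i)
  calc ‖x i‖ = Real.sqrt (‖x i‖ ^ 2) := (Real.sqrt_sq (norm_nonneg _)).symm
    _ ≤ Real.sqrt (∑ a : Fin d, ‖x a‖ ^ 2) := Real.sqrt_le_sqrt h1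
    _ = ‖x‖ := (EuclideanSpace.norm_eq x).symm

lemma wlp_fst_le {d₁ d₂ : ℕ}
    (z : WithLp 2 (EuclideanSpace ℂ (Fin d₁) × EuclideanSpace ℂ (Fin d₂))) :
    ‖z.fst‖ ≤ ‖z‖ := by
  calc ‖z.fst‖ = Real.sqrt (‖z.fst‖ ^ 2) := (Real.sqrt_sq (norm_nonneg _)).symm
    _ ≤ Real.sqrt (‖z.fst‖ ^ 2 + ‖z.snd‖ ^ 2) := Real.sqrt_le_sqrt (by nlinarith [norm_nonneg z.snd])
    _ = ‖z‖ := (WithLp.prod_norm_eq_of_L2 z).symm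

lemma wlp_snd_le {d₁ d₂ : ℕ}
    (z : WithLp 2 (EuclideanSpace ℂ (Fin d₁) × EuclideanSpace ℂ (Fin d₂))) :
    ‖z.snd‖ ≤ ‖z‖ := by
  calc ‖z.snd‖ = Real.sqrt (‖z.snd‖ ^ 2) := (Real.sqrt_sq (norm_nonneg _)).symm
    _ ≤ Real.sqrt (‖z.fst‖ ^ 2 + ‖z.snd‖ ^ 2) := Real.sqrt_le_sqrt (by nlinarith [norm_nonneg z.fst])
    _ = ‖z‖ := (WithLp.prod_norm_eq_of_L2 z).symm

/-- The separation lemma: a pair of exact degrees (m,n) whose gcd degree is k < j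
is at positive distance from 𝒫ʲ_{m,n}. -/
lemma key_sep (m n j k : ℕ) (hjm : j ≤ m) (hjn : j ≤ n) (hkj : k < j) (ph qh : ℂ[X])
    (hph : ph.degree = (m : WithBot ℕ)) (hqh : qh.degree = (n : WithBot ℕ))
    (hgcd : gcdDeg ph qh = k) :
    ∃ δ : ℝ, 0 < δ ∧ ∀ r s : ℂ[X], (r, s) ∈ Pmnk m n j → δ ≤ pairNorm (ph - r) (qh - s) := by
  by_contra hcon
  push_neg at hcon
  have hseq : ∀ N : ℕ, ∃ r s : ℂ[X], (r, s) ∈ Pmnk m n j ∧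
      pairNorm (ph - r) (qh - s) < 1 / ((N : ℝ) + 1) :=
    fun N => hcon (1 / ((N : ℝ) + 1)) (by positivity)
  choose r s hmem hlt using hseq
  -- basic degree facts
  have hph0 : ph ≠ 0 := fun h => by rw [h, Polynomial.degree_zero] at hph; simp at hph
  have hqh0 : qh ≠ 0 := fun h => by rw [h, Polynomial.degree_zero] at hqh; simp at hqh
  have hphm : ph.natDegree = m := Polynomial.natDegree_eq_of_degree_eq_some hph
  have hqhn : qh.natDegree = n := Polynomial.natDegree_eq_of_degree_eq_some hqh
  -- witnesses
  have hwit : ∀ N : ℕ, ∃ u : WithLp 2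
      (EuclideanSpace ℂ (Fin (n - j + 1)) × EuclideanSpace ℂ (Fin (m - j + 1))),
      ‖u‖ = 1 ∧ r N * ofE u.fst = s N * ofE u.snd := by
    intro N
    obtain ⟨⟨hrd, hsd⟩, hg⟩ := hmem N
    have hr0 : r N ≠ 0 := fun h => by rw [h, Polynomial.degree_zero] at hrd; simp at hrd
    have hs0 : s N ≠ 0 := fun h => by rw [h, Polynomial.degree_zero] at hsd; simp at hsd
    have hrm : (r N).natDegree = m := Polynomial.natDegree_eq_of_degree_eq_some hrd
    have hsn : (s N).natDegree = n := Polynomial.natDegree_eq_of_degree_eq_some hsd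
    set d := EuclideanDomain.gcd (r N) (s N) with hd_def
    have hd0 : d ≠ 0 := fun h => hr0 (EuclideanDomain.gcd_eq_zero_iff.mp h).1
    have hdr : d * (r N / d) = r N :=
      EuclideanDomain.mul_div_cancel' hd0 (EuclideanDomain.gcd_dvd_left _ _)
    have hds : d * (s N / d) = s N :=
      EuclideanDomain.mul_div_cancel' hd0 (EuclideanDomain.gcd_dvd_right _ _)
    set w := s N / d with hw_def
    set v := r N / d with hv_def
    have hw0 : w ≠ 0 := fun h => hs0 (by rw [← hds, h, mul_zero])
    have hv0 : v ≠ 0 := fun h => hr0 (by rw [← hdr, h, mul_zero])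
    have hdj : d.natDegree = j := hg
    have hnw : d.natDegree + w.natDegree = n := by
      rw [← Polynomial.natDegree_mul hd0 hw0, hds, hsn]
    have hnv : d.natDegree + v.natDegree = m := by
      rw [← Polynomial.natDegree_mul hd0 hv0, hdr, hrm]
    have hwdeg : w.degree < ((n - j + 1 : ℕ) : WithBot ℕ) := by
      rw [Polynomial.degree_eq_natDegree hw0]
      exact_mod_cast by omega
    have hvdeg : v.degree < ((m - j + 1 : ℕ) : WithBot ℕ) := by
      rw [Polynomial.degree_eq_natDegree hv0]
      exact_mod_cast by omega
    set u₀ := mk2 (toE (n - j + 1) w) (toE (m - j + 1) v) with hu₀_def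
    have hofw : ofE u₀.fst = w := ofE_toE w hwdeg
    have hofv : ofE u₀.snd = v := ofE_toE v hvdeg
    have hid0 : r N * w = s N * v := by rw [← hdr, ← hds]; ring
    have hu₀0 : u₀ ≠ 0 := by
      intro h
      apply hw0
      rw [← hofw, h]
      show ofE (0 : EuclideanSpace ℂ (Fin (n - j + 1))) = 0
      simp [ofE]
    have hn0 : ‖u₀‖ ≠ 0 := norm_ne_zero_iff.mpr hu₀0
    set t : ℂ := ((‖u₀‖⁻¹ : ℝ) : ℂ) with ht_def
    refine ⟨t • u₀, ?_, ?_⟩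
    · rw [norm_smul, ht_def, Complex.norm_real, Real.norm_eq_abs,
        abs_of_nonneg (by positivity), inv_mul_cancel₀ hn0]
    · show r N * ofE (t • u₀.fst) = s N * ofE (t • u₀.snd)
      rw [ofE_smul, ofE_smul, hofw, hofv, mul_smul_comm, mul_smul_comm, hid0]
  choose u hu1 hid using hwit
  -- compactness
  have husph : ∀ N, u N ∈ Metric.sphere (0 : WithLp 2
      (EuclideanSpace ℂ (Fin (n - j + 1)) × EuclideanSpace ℂ (Fin (m - j + 1)))) 1 :=
    fun N => mem_sphere_zero_iff_norm.mpr (hu1 N)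
  obtain ⟨uL, huLsph, σ, hσ, hconv⟩ := (isCompact_sphere (0 : WithLp 2
      (EuclideanSpace ℂ (Fin (n - j + 1)) × EuclideanSpace ℂ (Fin (m - j + 1)))) 1).tendsto_subseq
    husph
  -- coordinate convergence of u ∘ σ
  have hdist0 : Tendsto (fun N => ‖u (σ N) - uL‖) atTop (𝓝 0) :=
    tendsto_iff_norm_sub_tendsto_zero.mp hconv
  have hucoord1 : ∀ i : Fin (n - j + 1),
      Tendsto (fun N => (u (σ N)).fst i) atTop (𝓝 (uL.fst i)) := by
    intro i
    apply tendsto_sub_nhds_zero_iff.mp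
    refine squeeze_zero_norm (fun N => ?_) hdist0
    have h1 : (u (σ N)).fst i - uL.fst i = (u (σ N) - uL).fst i := rfl
    rw [h1]
    exact (euclid_apply_le _ i).trans (wlp_fst_le _)
  have hucoord2 : ∀ i : Fin (m - j + 1),
      Tendsto (fun N => (u (σ N)).snd i) atTop (𝓝 (uL.snd i)) := by
    intro i
    apply tendsto_sub_nhds_zero_iff.mp
    refine squeeze_zero_norm (fun N => ?_) hdist0
    have h1 : (u (σ N)).snd i - uL.snd i = (u (σ N) - uL).snd i := rfl
    rw [h1]
    exact (euclid_apply_le _ i).trans (wlp_snd_le _)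
  -- coefficient convergence of r, s
  have hbound : Tendsto (fun N : ℕ => 1 / ((N : ℝ) + 1)) atTop (𝓝 0) :=
    tendsto_one_div_add_atTop_nhds_zero_nat
  have hrc : ∀ a : ℕ, Tendsto (fun N => (r (σ N)).coeff a) atTop (𝓝 (ph.coeff a)) := by
    intro a
    apply tendsto_sub_nhds_zero_iff.mp
    refine squeeze_zero_norm (fun N => ?_) hbound
    have h1 : ‖(r (σ N)).coeff a - ph.coeff a‖ = ‖(ph - r (σ N)).coeff a‖ := by
      rw [Polynomial.coeff_sub, norm_sub_rev]
    rw [h1]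
    refine le_trans (coeff_fst_le_pairNorm _ (qh - s (σ N)) a) (le_trans (hlt (σ N)).le ?_)
    apply one_div_le_one_div_of_le (by positivity)
    have hN : (N : ℝ) ≤ (σ N : ℝ) := Nat.cast_le.mpr (hσ.le_apply (x := N))
    linarith
  have hsc : ∀ a : ℕ, Tendsto (fun N => (s (σ N)).coeff a) atTop (𝓝 (qh.coeff a)) := by
    intro a
    apply tendsto_sub_nhds_zero_iff.mp
    refine squeeze_zero_norm (fun N => ?_) hbound
    have h1 : ‖(s (σ N)).coeff a - qh.coeff a‖ = ‖(qh - s (σ N)).coeff a‖ := by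
      rw [Polynomial.coeff_sub, norm_sub_rev]
    rw [h1]
    refine le_trans (coeff_snd_le_pairNorm (ph - r (σ N)) _ a) (le_trans (hlt (σ N)).le ?_)
    apply one_div_le_one_div_of_le (by positivity)
    have hN : (N : ℝ) ≤ (σ N : ℝ) := Nat.cast_le.mpr (hσ.le_apply (x := N))
    linarith
  set wL := ofE uL.fst with hwL_def
  set vL := ofE uL.snd with hvL_def
  have hwc : ∀ a : ℕ,
      Tendsto (fun N => (ofE (u (σ N)).fst).coeff a) atTop (𝓝 (wL.coeff a)) := by
    intro a
    simp only [ofE_coeff, hwL_def]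
    by_cases hlt' : a < n - j + 1
    · simp only [dif_pos hlt']
      exact hucoord1 ⟨a, hlt'⟩
    · simp only [dif_neg hlt']
      exact tendsto_const_nhds
  have hvc : ∀ a : ℕ,
      Tendsto (fun N => (ofE (u (σ N)).snd).coeff a) atTop (𝓝 (vL.coeff a)) := by
    intro a
    simp only [ofE_coeff, hvL_def]
    by_cases hlt' : a < m - j + 1
    · simp only [dif_pos hlt']
      exact hucoord2 ⟨a, hlt'⟩
    · simp only [dif_neg hlt']
      exact tendsto_const_nhds
  -- pass to the limit in the bilinear identity
  have hzero : ∀ i : ℕ, (ph * wL - qh * vL).coeff i = 0 := by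
    intro i
    have h1 : Tendsto
        (fun N => (r (σ N) * ofE (u (σ N)).fst - s (σ N) * ofE (u (σ N)).snd).coeff i)
        atTop (𝓝 ((ph * wL - qh * vL).coeff i)) := by
      simp only [Polynomial.coeff_sub, Polynomial.coeff_mul]
      exact Tendsto.sub
        (tendsto_finset_sum _ fun ab _ => (hrc ab.1).mul (hwc ab.2))
        (tendsto_finset_sum _ fun ab _ => (hsc ab.1).mul (hvc ab.2))
    have h2 : (fun N => (r (σ N) * ofE (u (σ N)).fst
        - s (σ N) * ofE (u (σ N)).snd).coeff i) = fun _ => (0 : ℂ) := by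
      funext N
      rw [hid (σ N), sub_self, Polynomial.coeff_zero]
    rw [h2] at h1
    exact tendsto_nhds_unique h1 tendsto_const_nhds
  have hideq : ph * wL = qh * vL := by
    have h3 : ph * wL - qh * vL = 0 := Polynomial.ext fun i => by
      rw [hzero i, Polynomial.coeff_zero]
    exact sub_eq_zero.mp h3
  -- the limit witness is nonzero
  have huL1 : ‖uL‖ = 1 := mem_sphere_zero_iff_norm.mp huLsph
  have hwL0 : wL ≠ 0 := by
    intro h
    have hvL0 : vL = 0 := by
      have h4 := hideq
      rw [h, mul_zero] at h4
      exact (mul_eq_zero.mp h4.symm).resolve_left hqh0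
    have h5 : uL.fst = 0 := ofE_eq_zero _ h
    have h6 : uL.snd = 0 := ofE_eq_zero _ hvL0
    have h7 : uL = 0 := by
      have : uL = mk2 uL.fst uL.snd := rfl
      rw [this, h5, h6]
      rfl
    rw [h7, norm_zero] at huL1
    norm_num at huL1
  -- lcm degree argument
  set g := EuclideanDomain.gcd ph qh with hg_def
  set L := EuclideanDomain.lcm ph qh with hL_def
  have hgl : g * L = ph * qh := EuclideanDomain.gcd_mul_lcm ph qh
  have hg0 : g ≠ 0 := fun h => hph0 (EuclideanDomain.gcd_eq_zero_iff.mp h).1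
  have hL0 : L ≠ 0 := fun h => (mul_ne_zero hph0 hqh0) (by rw [← hgl, h, mul_zero])
  have hdeg_eq : g.natDegree + L.natDegree = m + n := by
    rw [← Polynomial.natDegree_mul hg0 hL0, hgl, Polynomial.natDegree_mul hph0 hqh0, hphm, hqhn]
  have hdvd : L ∣ ph * wL := EuclideanDomain.lcm_dvd ⟨wL, rfl⟩ ⟨vL, hideq⟩
  have hpw0 : ph * wL ≠ 0 := mul_ne_zero hph0 hwL0
  have hLle : L.natDegree ≤ (ph * wL).natDegree := Polynomial.natDegree_le_of_dvd hdvd hpw0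
  have hmul : (ph * wL).natDegree = m + wL.natDegree := by
    rw [Polynomial.natDegree_mul hph0 hwL0, hphm]
  have hwLdeg : wL.natDegree ≤ n - j := natDegree_ofE_le uL.fst
  have hgk : g.natDegree = k := hgcd
  omega

/-- Each manifold 𝒫ʲ_{m,n} with j ≤ min(m,n) is nonempty. -/
lemma Pmnk_nonempty (m n j : ℕ) (hjm : j ≤ m) (hjn : j ≤ n) :
    ((X + C 1) ^ j * X ^ (m - j), (X + C 1) ^ j * (X + C 2) ^ (n - j)) ∈ Pmnk m n j := by
  have hcop : IsCoprime (X : ℂ[X]) (X + C 2) := by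
    refine ⟨-C (2⁻¹), C (2⁻¹), ?_⟩
    ring_nf
    rw [← C_mul]
    norm_num
  set g : ℂ[X] := (X + C 1) ^ j with hg_def
  set A : ℂ[X] := X ^ (m - j) with hA_def
  set B : ℂ[X] := (X + C 2) ^ (n - j) with hB_def
  have hgm : g.Monic := (Polynomial.monic_X_add_C 1).pow _
  have hAm : A.Monic := Polynomial.monic_X_pow _
  have hBm : B.Monic := (Polynomial.monic_X_add_C 2).pow _
  have hgdeg : g.natDegree = j := by
    rw [hg_def, Polynomial.natDegree_pow, Polynomial.natDegree_X_add_C, mul_one]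
  have hAdeg : A.natDegree = m - j := by
    rw [hA_def, Polynomial.natDegree_X_pow]
  have hBdeg : B.natDegree = n - j := by
    rw [hB_def, Polynomial.natDegree_pow, Polynomial.natDegree_X_add_C, mul_one]
  have hrm : (g * A).Monic := hgm.mul hAm
  have hsm : (g * B).Monic := hgm.mul hBm
  have hrdeg : (g * A).degree = (m : WithBot ℕ) := by
    rw [Polynomial.degree_eq_natDegree hrm.ne_zero, hgm.natDegree_mul hAm, hgdeg, hAdeg]
    exact_mod_cast by omega
  have hsdeg : (g * B).degree = (n : WithBot ℕ) := by
    rw [Polynomial.degree_eq_natDegree hsm.ne_zero, hgm.natDegree_mul hBm, hgdeg, hBdeg]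
    exact_mod_cast by omega
  refine ⟨⟨hrdeg, hsdeg⟩, ?_⟩
  show (EuclideanDomain.gcd (g * A) (g * B)).natDegree = j
  set dgcd := EuclideanDomain.gcd (g * A) (g * B) with hd_def
  have hd0 : dgcd ≠ 0 := fun h => hrm.ne_zero (EuclideanDomain.gcd_eq_zero_iff.mp h).1
  have hgd : g ∣ dgcd := EuclideanDomain.dvd_gcd ⟨A, rfl⟩ ⟨B, rfl⟩
  have hdg : dgcd ∣ g := by
    obtain ⟨a, b, hab⟩ := (hcop.pow (m := m - j) (n := n - j))
    have h1 : g = a * (g * A) + b * (g * B) := by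
      have : a * (g * A) + b * (g * B) = g * (a * A + b * B) := by ring
      rw [this, hab, mul_one]
    rw [h1]
    exact dvd_add ((EuclideanDomain.gcd_dvd_left _ _).mul_left a)
      ((EuclideanDomain.gcd_dvd_right _ _).mul_left b)
  have h2 : dgcd.natDegree ≤ g.natDegree := Polynomial.natDegree_le_of_dvd hdg hgm.ne_zero
  have h3 : g.natDegree ≤ dgcd.natDegree := Polynomial.natDegree_le_of_dvd hgd hd0
  omega

/-- The GCD degree of (p̂,q̂) is identified as the largest j with θ_j(p,q) < ε
for any nearby pair (p,q) and suitable threshold ε. -/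
theorem gcd_degree_identification (m n k : ℕ) (hm : 1 ≤ m) (hn : 1 ≤ n) (hk : k ≤ min m n)
    (ph qh : ℂ[X]) (hmem : (ph, qh) ∈ Pmnk m n k) :
    ∃ θ : ℝ, 0 < θ ∧ ∀ p q : ℂ[X], (p, q) ∈ Cmn m n →
      pairNorm (p - ph) (q - qh) < θ →
      ∀ ε : ℝ, pairNorm (p - ph) (q - qh) < ε → ε < θ →
        IsGreatest {j : ℕ | j ≤ min m n ∧ theta m n j p q < ε} k := by
  obtain ⟨⟨hphd, hqhd⟩, hgk⟩ := hmem
  -- separation constants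
  have H : ∀ j : ℕ, ∃ δ : ℝ, 0 < δ ∧ (k < j → j ≤ m → j ≤ n →
      ∀ r s : ℂ[X], (r, s) ∈ Pmnk m n j → δ ≤ pairNorm (ph - r) (qh - s)) := by
    intro j
    by_cases hc : k < j ∧ j ≤ m ∧ j ≤ n
    · obtain ⟨δ, hδpos, hδ⟩ := key_sep m n j k hc.2.1 hc.2.2 hc.1 ph qh hphd hqhd hgk
      exact ⟨δ, hδpos, fun _ _ _ => hδ⟩
    · refine ⟨1, one_pos, fun h1 h2 h3 => absurd ⟨h1, h2, h3⟩ hc⟩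
  choose δ hδpos hδ using H
  have hne : (Finset.range (min m n + 1)).Nonempty := ⟨0, Finset.mem_range.mpr (by omega)⟩
  set θ := ((Finset.range (min m n + 1)).inf' hne δ) / 2 with hθ_def
  have hθpos : 0 < θ := by
    apply div_pos _ two_pos
    rw [Finset.lt_inf'_iff]
    exact fun b _ => hδpos b
  refine ⟨θ, hθpos, ?_⟩
  intro p q hpq hη ε hηε hεθ
  obtain ⟨hpd, hqd⟩ := hpq
  constructor
  · -- k is in the set
    refine ⟨hk, ?_⟩
    have hle : theta m n k p q ≤ pairNorm (p - ph) (q - qh) := by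
      apply csInf_le
      · refine ⟨0, ?_⟩
        rintro x ⟨rs, _, rfl⟩
        exact Real.sqrt_nonneg _
      · exact ⟨(ph, qh), ⟨⟨hphd, hqhd⟩, hgk⟩, rfl⟩
    exact lt_of_le_of_lt hle hηε
  · -- k is an upper bound
    rintro j ⟨hjmn, hjθ⟩
    by_contra hjk
    push_neg at hjk
    have hjm : j ≤ m := le_trans hjmn (min_le_left _ _)
    have hjn : j ≤ n := le_trans hjmn (min_le_right _ _)
    -- extract a close point of 𝒫ʲ
    have hPne : ((fun rs : ℂ[X] × ℂ[X] => pairNorm (p - rs.1) (q - rs.2)) ''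
        Pmnk m n j).Nonempty :=
      ⟨_, Set.mem_image_of_mem _ (Pmnk_nonempty m n j hjm hjn)⟩
    obtain ⟨x, hx, hxlt⟩ := exists_lt_of_csInf_lt hPne hjθ
    obtain ⟨⟨rr, ss⟩, hrsmem, rfl⟩ := hx
    obtain ⟨hrrd, hssd⟩ := hrsmem.1
    -- triangle inequality
    have hm1 : ∀ f : ℂ[X], f.degree = (m : WithBot ℕ) →
        ∀ g : ℂ[X], g.degree = (m : WithBot ℕ) → (f - g).degree < ((m + 1 : ℕ) : WithBot ℕ) := by
      intro f hf g hg
      apply lt_of_le_of_lt (Polynomial.degree_sub_le _ _)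
      rw [hf, hg, max_self]
      exact_mod_cast Nat.lt_succ_self m
    have hn1 : ∀ f : ℂ[X], f.degree = (n : WithBot ℕ) →
        ∀ g : ℂ[X], g.degree = (n : WithBot ℕ) → (f - g).degree < ((n + 1 : ℕ) : WithBot ℕ) := by
      intro f hf g hg
      apply lt_of_le_of_lt (Polynomial.degree_sub_le _ _)
      rw [hf, hg, max_self]
      exact_mod_cast Nat.lt_succ_self n
    have htri : pairNorm (ph - rr) (qh - ss)
        ≤ pairNorm (ph - p) (qh - q) + pairNorm (p - rr) (q - ss) := by
      have h1 := pairNorm_triangle (d₁ := m + 1) (d₂ := n + 1)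
        (ph - p) (qh - q) (p - rr) (q - ss)
        (hm1 ph hphd p hpd) (hm1 p hpd rr hrrd) (hn1 qh hqhd q hqd) (hn1 q hqd ss hssd)
      rw [sub_add_sub_cancel, sub_add_sub_cancel] at h1
      exact h1
    have hδj : δ j ≤ pairNorm (ph - rr) (qh - ss) :=
      hδ j hjk hjm hjn rr ss hrsmem
    have hinfle : (Finset.range (min m n + 1)).inf' hne δ ≤ δ j :=
      Finset.inf'_le _ (Finset.mem_range.mpr (by omega))
    have hcomm : pairNorm (ph - p) (qh - q) = pairNorm (p - ph) (q - qh) :=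
      pairNorm_sub_comm ph p qh q
    linarith
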